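/- For ξ ∈ ℝ⁹ written as ξ = (ξ^φ, ξ^v, ξ^r), define ξ^∧ ∈ se₂(3) as the 5×5 matrix [[ξ^φ×, ξ^v, ξ^r],[0,0,0],[0,0,0]]. Then the matrix exponential of ξ^∧ is [[exp(ξ^φ×), J(ξ^φ)ξ^v, J(ξ^φ)ξ^r],[0,1,0],[0,0,1]], where J(φ) = Σ_{n≥0} (φ^×)ⁿ/(n+1)! is the left Jacobian of SO(3); in particular exp(ξ^∧) ∈ SE₂(3). -/

import Mathlib

open Matrix

/-- The cross operator mapping `u ∈ ℝ³` to its skew-symmetric matrix. -/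
def skew (u : Fin 3 → ℝ) : Matrix (Fin 3) (Fin 3) ℝ :=
  !![0, -u 2, u 1; u 2, 0, -u 0; -u 1, u 0, 0]

/-- Membership in SO(3): orthogonal with determinant 1. -/
def IsSO3 (C : Matrix (Fin 3) (Fin 3) ℝ) : Prop :=
  Cᵀ * C = 1 ∧ C.det = 1

/-- The 5×5 extended-pose matrix `[[C, v, r],[0,1,0],[0,0,1]]`. -/
def se23mk (C : Matrix (Fin 3) (Fin 3) ℝ) (v r : Fin 3 → ℝ) :
    Matrix (Fin 5) (Fin 5) ℝ :=
  Matrix.of fun i j =>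
    if hi : (i : ℕ) < 3 then
      if hj : (j : ℕ) < 3 then C ⟨i, hi⟩ ⟨j, hj⟩
      else if (j : ℕ) = 3 then v ⟨i, hi⟩ else r ⟨i, hi⟩
    else if i = j then 1 else 0

/-- The set `SE₂(3)` of extended poses. -/
def SE23 : Set (Matrix (Fin 5) (Fin 5) ℝ) :=
  {X | ∃ C v r, IsSO3 C ∧ X = se23mk C v r}

/-- The `se₂(3)` wedge of `(ξ^φ, ξ^v, ξ^r)`: the 5×5 matrix
`[[ξ^φ×, ξ^v, ξ^r],[0,0,0],[0,0,0]]`. -/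
def se23wedge (ξφ ξv ξr : Fin 3 → ℝ) : Matrix (Fin 5) (Fin 5) ℝ :=
  Matrix.of fun i j =>
    if hi : (i : ℕ) < 3 then
      if hj : (j : ℕ) < 3 then skew ξφ ⟨i, hi⟩ ⟨j, hj⟩
      else if (j : ℕ) = 3 then ξv ⟨i, hi⟩ else ξr ⟨i, hi⟩
    else 0

/-- The left Jacobian of SO(3), `J(φ) = Σ_{n≥0} (φ^×)ⁿ/(n+1)!`. -/
noncomputable def leftJac (φ : Fin 3 → ℝ) : Matrix (Fin 3) (Fin 3) ℝ :=
  ∑' n : ℕ, ((n + 1).factorial : ℝ)⁻¹ • (skew φ) ^ n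


/-!
Write `ξ^∧ = [[S, B], [0, 0]]` in blocks, with `S = ξ^φ×` and `B = [ξ^v ξ^r]`. Then
`(ξ^∧)^(k+1) = [[S^(k+1), S^k B], [0, 0]]`, so summing the exponential series blockwise gives
`exp ξ^∧ = [[exp S, J(S) B], [0, 1]]`. Moreover `exp S` is orthogonal because `Sᵀ = -S`, and its
determinant is positive because `exp S = (exp (S/2))²`, hence equal to `1`.
-/

open NormedSpace

noncomputable def leftJacobian {A : Type*} [Ring A] [Algebra ℝ A] [TopologicalSpace A] (a : A) :
    A :=
  ∑' n : ℕ, ((n + 1).factorial : ℝ)⁻¹ • a ^ n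

section NormedAlgebra

variable {A : Type*} [NormedRing A] [NormedAlgebra ℝ A] [CompleteSpace A]

theorem hasSum_leftJacobian (a : A) :
    HasSum (fun n : ℕ => ((n + 1).factorial : ℝ)⁻¹ • a ^ n) (leftJacobian a) := by
  refine (Summable.of_norm_bounded (norm_expSeries_summable' (𝕂 := ℝ) a) fun n => ?_).hasSum
  rw [norm_smul, norm_smul]
  gcongr
  simp only [norm_inv, RCLike.norm_natCast]
  gcongr
  exact n.le_succ

theorem hasSum_exp_sub_one (a : A) :
    HasSum (fun n : ℕ => ((n + 1).factorial : ℝ)⁻¹ • a ^ (n + 1)) (exp a - 1) := by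
  have h := exp_series_hasSum_exp' (𝕂 := ℝ) a
  rw [← hasSum_nat_add_iff' 1] at h
  simpa using h

end NormedAlgebra

theorem HasSum.matrix_fromBlocks {ι l m n o R : Type*} [TopologicalSpace R] [AddCommMonoid R]
    {f₁₁ : ι → Matrix m l R} {f₁₂ : ι → Matrix m n R} {f₂₁ : ι → Matrix o l R}
    {f₂₂ : ι → Matrix o n R} {A B C D} (h₁₁ : HasSum f₁₁ A) (h₁₂ : HasSum f₁₂ B)
    (h₂₁ : HasSum f₂₁ C) (h₂₂ : HasSum f₂₂ D) :
    HasSum (fun i => fromBlocks (f₁₁ i) (f₁₂ i) (f₂₁ i) (f₂₂ i)) (fromBlocks A B C D) := by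
  refine Pi.hasSum.2 fun i => Pi.hasSum.2 fun j => ?_
  rcases i with i | i <;> rcases j with j | j
  · exact Pi.hasSum.1 (Pi.hasSum.1 h₁₁ i) j
  · exact Pi.hasSum.1 (Pi.hasSum.1 h₁₂ i) j
  · exact Pi.hasSum.1 (Pi.hasSum.1 h₂₁ i) j
  · exact Pi.hasSum.1 (Pi.hasSum.1 h₂₂ i) j

namespace Matrix

theorem mul_transpose_of_fin_two {m n R : Type*} [Fintype n] [CommSemiring R] (M : Matrix m n R)
    (v w : n → R) : M * (of ![v, w])ᵀ = (of ![M *ᵥ v, M *ᵥ w])ᵀ := by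
  ext i j; fin_cases j <;> simp [mul_apply, mulVec, dotProduct]

variable {m n : Type*} [Fintype m] [DecidableEq m] [Fintype n] [DecidableEq n]

theorem fromBlocks_zero_zero_pow_succ {R : Type*} [Semiring R] (S : Matrix m m R)
    (B : Matrix m n R) (k : ℕ) :
    fromBlocks S B (0 : Matrix n m R) 0 ^ (k + 1) = fromBlocks (S ^ (k + 1)) (S ^ k * B) 0 0 := by
  induction k with
  | zero => simp
  | succ k ih => rw [pow_succ, ih, fromBlocks_multiply]; simp [pow_succ, Matrix.mul_assoc]

theorem exp_fromBlocks_zero_zero (S : Matrix m m ℝ) (B : Matrix m n ℝ) :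
    exp (fromBlocks S B (0 : Matrix n m ℝ) 0) = fromBlocks (exp S) (leftJacobian S * B) 0 1 := by
  have hS : HasSum (fun k : ℕ => ((k + 1).factorial : ℝ)⁻¹ • S ^ (k + 1)) (exp S - 1) := by
    open scoped Norms.Operator in exact hasSum_exp_sub_one S
  have hJ : HasSum (fun k : ℕ => ((k + 1).factorial : ℝ)⁻¹ • S ^ k) (leftJacobian S) := by
    open scoped Norms.Operator in exact hasSum_leftJacobian S
  have hX : HasSum
      (fun k : ℕ => ((k + 1).factorial : ℝ)⁻¹ • fromBlocks S B (0 : Matrix n m ℝ) 0 ^ (k + 1))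
      (exp (fromBlocks S B 0 0) - 1) := by
    open scoped Norms.Operator in exact hasSum_exp_sub_one _
  have hJB : HasSum (fun k : ℕ => ((k + 1).factorial : ℝ)⁻¹ • (S ^ k * B))
      (leftJacobian S * B) := by
    simpa [Function.comp_def, Matrix.smul_mul] using
      hJ.map (mulRightLinearMap m ℝ B) (continuous_id.matrix_mul continuous_const)
  simp_rw [fromBlocks_zero_zero_pow_succ, fromBlocks_smul, smul_zero] at hX
  rw [sub_eq_iff_eq_add.1 (hX.unique (hS.matrix_fromBlocks hJB hasSum_zero hasSum_zero)),
    ← fromBlocks_one, fromBlocks_add]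
  simp

theorem exp_reindex {𝕜 : Type*} [RCLike 𝕜] (e : m ≃ n) (A : Matrix m m 𝕜) :
    exp (reindex e e A) = reindex e e (exp A) := by
  open scoped Norms.Operator in
  exact (map_exp (reindexAlgEquiv 𝕜 𝕜 e) (continuous_id.matrix_reindex e e) A).symm

theorem transpose_exp_mul_exp_of_transpose_eq_neg {A : Matrix m m ℝ} (hA : Aᵀ = -A) :
    (exp A)ᵀ * exp A = 1 := by
  rw [← exp_transpose, hA, ← exp_add_of_commute _ _ (Commute.refl A).neg_left, neg_add_cancel,
    exp_zero]

theorem det_exp_pos (A : Matrix m m ℝ) : 0 < (exp A).det := by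
  have hA : A = (2⁻¹ : ℝ) • A + (2⁻¹ : ℝ) • A := by rw [← add_smul]; norm_num
  have hdet : (exp ((2⁻¹ : ℝ) • A)).det ≠ 0 :=
    (isUnit_det_of_left_inverse (Matrix.isUnit_exp ((2⁻¹ : ℝ) • A)).unit.inv_mul).ne_zero
  rw [hA, exp_add_of_commute _ _ (Commute.refl _), det_mul]
  exact mul_self_pos.2 hdet

theorem det_exp_eq_one_of_transpose_eq_neg {A : Matrix m m ℝ} (hA : Aᵀ = -A) :
    (exp A).det = 1 := by
  have h := congrArg det (transpose_exp_mul_exp_of_transpose_eq_neg hA)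
  rw [det_mul, det_transpose, det_one] at h
  exact (mul_self_eq_one_iff.1 h).resolve_right (by linarith [det_exp_pos A])

end Matrix

theorem leftJac_eq_leftJacobian (φ : Fin 3 → ℝ) : leftJac φ = leftJacobian (skew φ) := rfl

theorem skew_transpose (u : Fin 3 → ℝ) : (skew u)ᵀ = -skew u := by
  ext i j; fin_cases i <;> fin_cases j <;> simp [skew]

theorem isSO3_exp_skew (u : Fin 3 → ℝ) : IsSO3 (exp (skew u)) :=
  ⟨transpose_exp_mul_exp_of_transpose_eq_neg (skew_transpose u),
    det_exp_eq_one_of_transpose_eq_neg (skew_transpose u)⟩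

theorem se23wedge_eq_reindex (ξφ ξv ξr : Fin 3 → ℝ) :
    se23wedge ξφ ξv ξr = reindex finSumFinEquiv finSumFinEquiv
      (fromBlocks (skew ξφ) (of ![ξv, ξr])ᵀ (0 : Matrix (Fin 2) (Fin 3) ℝ) 0) := by
  ext i j; fin_cases i <;> fin_cases j <;> rfl

theorem se23mk_eq_reindex (C : Matrix (Fin 3) (Fin 3) ℝ) (v r : Fin 3 → ℝ) :
    se23mk C v r = reindex finSumFinEquiv finSumFinEquiv
      (fromBlocks C (of ![v, r])ᵀ (0 : Matrix (Fin 2) (Fin 3) ℝ) 1) := by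
  ext i j; fin_cases i <;> fin_cases j <;> rfl

theorem exp_se23wedge (ξφ ξv ξr : Fin 3 → ℝ) :
    NormedSpace.exp (se23wedge ξφ ξv ξr) =
      se23mk (NormedSpace.exp (skew ξφ)) (leftJac ξφ *ᵥ ξv) (leftJac ξφ *ᵥ ξr) ∧
    NormedSpace.exp (se23wedge ξφ ξv ξr) ∈ SE23 := by
  have h : exp (se23wedge ξφ ξv ξr) =
      se23mk (exp (skew ξφ)) (leftJac ξφ *ᵥ ξv) (leftJac ξφ *ᵥ ξr) := by
    rw [se23wedge_eq_reindex, exp_reindex, exp_fromBlocks_zero_zero, se23mk_eq_reindex,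
      mul_transpose_of_fin_two, leftJac_eq_leftJacobian]
  exact ⟨h, _, _, _, isSO3_exp_skew ξφ, h⟩
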